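/- Let ξ ∈ Λ_𝒪 = 𝒪[[T]] be coprime with T and M = Λ_𝒪/ξΛ_𝒪. Then M^Γ = M[T] = 0 and M_Γ = M/TM ≅ 𝒪/ξ(0)𝒪, so M has finite generalized Γ-Euler characteristic equal to |𝒪/ξ(0)𝒪| = |ξ(0)|_p^{−[𝒪:ℤ_p]} when ξ(0) ≠ 0. -/

import Mathlib

/-!
`T` is a prime of `Λ_𝒪` not dividing `ξ`, so multiplication by `T` is injective on
`M = Λ_𝒪/ξ`: `M[T] = 0`, hence `g_M = 0` has trivial kernel and cokernel `M/TM = Λ_𝒪/(ξ, T)`,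
which evaluation at `T = 0` identifies with `𝒪/ξ(0)`. The latter is finite because `ℤ_p`, a
discrete valuation ring with finite residue field, has finite quotients by nonzero ideals, and
this passes to the domain `𝒪`, which is finite over `ℤ_p`.
-/

noncomputable section

/-- The coinvariants submodule `tM` (for `t = T = γ - 1`, this is `T·M`, so that
`M_Γ = M ⧸ coinvSub R M t`). -/
noncomputable def coinvSub (R : Type*) [CommRing R] (M : Type*) [AddCommGroup M]
    [Module R M] (t : R) : Submodule R M :=
  Ideal.span {t} • ⊤

/-- The natural map `g_M : M^Γ → M_Γ`, i.e. from the `t`-torsion submodule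
`M[t] = M^Γ` to the coinvariants `M ⧸ tM = M_Γ`: inclusion followed by projection. -/
noncomputable def gGamma (R : Type*) [CommRing R] (M : Type*) [AddCommGroup M]
    [Module R M] (t : R) :
    Submodule.torsionBy R M t →ₗ[R] (M ⧸ coinvSub R M t) :=
  (coinvSub R M t).mkQ.comp (Submodule.torsionBy R M t).subtype

/-- `M` has finite generalized `Γ`-Euler characteristic. -/
noncomputable def FiniteGammaChar (R : Type*) [CommRing R] (M : Type*) [AddCommGroup M]
    [Module R M] (t : R) : Prop :=
  Finite (LinearMap.ker (gGamma R M t)) ∧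
  Finite ((M ⧸ coinvSub R M t) ⧸ LinearMap.range (gGamma R M t))

/-- `|Coker(g_M)|`. -/
noncomputable def gammaCokerCard (R : Type*) [CommRing R] (M : Type*) [AddCommGroup M]
    [Module R M] (t : R) : ℕ :=
  Nat.card ((M ⧸ coinvSub R M t) ⧸ LinearMap.range (gGamma R M t))

/-- `|Ker(g_M)|`. -/
noncomputable def gammaKerCard (R : Type*) [CommRing R] (M : Type*) [AddCommGroup M]
    [Module R M] (t : R) : ℕ :=
  Nat.card (LinearMap.ker (gGamma R M t))

theorem IsDiscreteValuationRing.hasFiniteQuotients (R : Type*) [CommRing R] [IsDomain R]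
    [IsDiscreteValuationRing R] [Finite (IsLocalRing.ResidueField R)] :
    Ring.HasFiniteQuotients R where
  finiteQuotient {I} hI := by
    obtain ⟨ϖ, hϖ⟩ := IsDiscreteValuationRing.exists_irreducible R
    obtain ⟨n, rfl⟩ := IsDiscreteValuationRing.ideal_eq_span_pow_irreducible hI hϖ
    exact IsLocalRing.finite_quotient_iff.mpr
      ⟨n, by rw [hϖ.maximalIdeal_eq, Ideal.span_singleton_pow]⟩

instance PadicInt.hasFiniteQuotients (p : ℕ) [Fact p.Prime] : Ring.HasFiniteQuotients ℤ_[p] :=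
  have : Finite (IsLocalRing.ResidueField ℤ_[p]) :=
    Finite.of_equiv _ (PadicInt.residueField (p := p)).symm.toEquiv
  IsDiscreteValuationRing.hasFiniteQuotients ℤ_[p]

section Coinvariants

variable {R : Type*} [CommRing R] {M : Type*} [AddCommGroup M] [Module R M]

theorem coinvSub_self (t : R) : coinvSub R R t = Ideal.span {t} := by
  rw [coinvSub, Ideal.smul_eq_mul, Ideal.mul_top]

theorem coinvSub_quotient (N : Submodule R M) (t : R) :
    coinvSub R (M ⧸ N) t = (coinvSub R M t).map N.mkQ := by
  rw [coinvSub, coinvSub, Submodule.map_smul'', Submodule.map_top, Submodule.range_mkQ]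

def quotientCoinvSubEquivQuotientSup (N : Submodule R M) (t : R) :
    ((M ⧸ N) ⧸ coinvSub R (M ⧸ N) t) ≃ₗ[R] M ⧸ (N ⊔ coinvSub R M t) :=
  (Submodule.quotEquivOfEq _ _ (coinvSub_quotient N t)).trans
    (Submodule.quotientQuotientEquivQuotientSup N (coinvSub R M t))

variable {t : R}

theorem subsingleton_ker_gGamma (h : Submodule.torsionBy R M t = ⊥) :
    Subsingleton (LinearMap.ker (gGamma R M t)) := by
  have : Subsingleton (Submodule.torsionBy R M t) := by rw [h]; infer_instance
  infer_instance

theorem range_gGamma_eq_bot (h : Submodule.torsionBy R M t = ⊥) :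
    LinearMap.range (gGamma R M t) = ⊥ := by
  have : Subsingleton (Submodule.torsionBy R M t) := by rw [h]; infer_instance
  exact LinearMap.range_eq_bot.mpr (Subsingleton.elim _ _)

def gammaCokerEquivOfTorsionByEqBot (h : Submodule.torsionBy R M t = ⊥) :
    ((M ⧸ coinvSub R M t) ⧸ LinearMap.range (gGamma R M t)) ≃ₗ[R] M ⧸ coinvSub R M t :=
  (Submodule.quotEquivOfEq _ _ (range_gGamma_eq_bot h)).trans (Submodule.quotEquivOfEqBot ⊥ rfl)

theorem gammaKerCard_eq_one_of_torsionBy_eq_bot (h : Submodule.torsionBy R M t = ⊥) :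
    gammaKerCard R M t = 1 :=
  have := subsingleton_ker_gGamma h
  Nat.card_of_subsingleton 0

theorem gammaCokerCard_eq_of_torsionBy_eq_bot (h : Submodule.torsionBy R M t = ⊥) :
    gammaCokerCard R M t = Nat.card (M ⧸ coinvSub R M t) :=
  Nat.card_congr (gammaCokerEquivOfTorsionByEqBot h).toEquiv

theorem finiteGammaChar_of_torsionBy_eq_bot (h : Submodule.torsionBy R M t = ⊥)
    [Finite (M ⧸ coinvSub R M t)] : FiniteGammaChar R M t :=
  have := subsingleton_ker_gGamma h
  ⟨inferInstance, .of_equiv _ (gammaCokerEquivOfTorsionByEqBot h).symm.toEquiv⟩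

end Coinvariants

namespace PowerSeries

variable {R : Type*} [CommRing R]

theorem torsionBy_X_quotient_span_eq_bot [IsDomain R] {ξ : R⟦X⟧} (hξ : constantCoeff ξ ≠ 0) :
    Submodule.torsionBy R⟦X⟧ (R⟦X⟧ ⧸ Ideal.span {ξ}) X = ⊥ := by
  refine (Submodule.eq_bot_iff _).mpr fun m hm => ?_
  obtain ⟨f, rfl⟩ := Ideal.Quotient.mk_surjective m
  rw [Submodule.mem_torsionBy_iff, ← Ideal.Quotient.mk_eq_mk, ← Submodule.Quotient.mk_smul,
    Submodule.Quotient.mk_eq_zero, smul_eq_mul, Ideal.mem_span_singleton'] at hm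
  obtain ⟨g, hg⟩ := hm
  have hXg : X ∣ g := by
    refine (X_prime.dvd_or_dvd ⟨f, by rw [← hg, mul_comm]⟩).resolve_right ?_
    rwa [X_dvd_iff]
  obtain ⟨k, rfl⟩ := hXg
  rw [Ideal.Quotient.eq_zero_iff_mem, Ideal.mem_span_singleton']
  exact ⟨k, X_mul_cancel (by rw [← hg]; ring)⟩

theorem mem_span_sup_span_X_iff {ξ f : R⟦X⟧} :
    f ∈ Ideal.span {ξ} ⊔ Ideal.span {X} ↔ constantCoeff f ∈ Ideal.span {constantCoeff ξ} := by
  simp only [Submodule.mem_sup, Ideal.mem_span_singleton']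
  constructor
  · rintro ⟨_, ⟨a, rfl⟩, _, ⟨b, rfl⟩, rfl⟩
    exact ⟨constantCoeff a, by simp⟩
  · rintro ⟨a, ha⟩
    obtain ⟨b, hb⟩ := X_dvd_iff.mpr (show constantCoeff (f - C a * ξ) = 0 by simp [ha])
    exact ⟨C a * ξ, ⟨C a, rfl⟩, f - C a * ξ, ⟨b, by rw [hb, mul_comm]⟩, by ring⟩

def constantCoeffModₐ (ξ : R⟦X⟧) : R⟦X⟧ →ₐ[R] R ⧸ Ideal.span {constantCoeff ξ} where
  toRingHom := (Ideal.Quotient.mk _).comp constantCoeff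
  commutes' r := by simp

theorem ker_constantCoeffModₐ (ξ : R⟦X⟧) :
    RingHom.ker (constantCoeffModₐ ξ) = Ideal.span {ξ} ⊔ Ideal.span {X} := by
  ext f
  rw [mem_span_sup_span_X_iff, RingHom.mem_ker, ← Ideal.Quotient.eq_zero_iff_mem]
  rfl

theorem constantCoeffModₐ_surjective (ξ : R⟦X⟧) : Function.Surjective (constantCoeffModₐ ξ) :=
  Ideal.Quotient.mk_surjective.comp fun a => ⟨C a, constantCoeff_C a⟩

def quotientSpanSupSpanXAlgEquiv (ξ : R⟦X⟧) :
    (R⟦X⟧ ⧸ (Ideal.span {ξ} ⊔ Ideal.span {X})) ≃ₐ[R] R ⧸ Ideal.span {constantCoeff ξ} :=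
  (Ideal.quotientEquivAlgOfEq R (ker_constantCoeffModₐ ξ).symm).trans
    (Ideal.quotientKerAlgEquivOfSurjective (constantCoeffModₐ_surjective ξ))

def quotientCoinvSubXEquiv (ξ : R⟦X⟧) :
    ((R⟦X⟧ ⧸ Ideal.span {ξ}) ⧸ coinvSub R⟦X⟧ (R⟦X⟧ ⧸ Ideal.span {ξ}) X)
      ≃ₗ[R] R ⧸ Ideal.span {constantCoeff ξ} :=
  ((quotientCoinvSubEquivQuotientSup (Ideal.span {ξ}) X).trans
      (Submodule.quotEquivOfEq _ _ (by rw [coinvSub_self]))).restrictScalars R |>.trans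
    (quotientSpanSupSpanXAlgEquiv ξ).toLinearEquiv

end PowerSeries

theorem stmt11_general (p : ℕ) [Fact p.Prime]
    (𝒪 : Type*) [CommRing 𝒪] [IsDomain 𝒪]
    [Algebra ℤ_[p] 𝒪] [Module.Finite ℤ_[p] 𝒪]
    (ξ : PowerSeries 𝒪) (hξ : PowerSeries.constantCoeff ξ ≠ 0) :
    Submodule.torsionBy (PowerSeries 𝒪) (PowerSeries 𝒪 ⧸ Ideal.span {ξ})
        PowerSeries.X = ⊥ ∧
    Nonempty (((PowerSeries 𝒪 ⧸ Ideal.span {ξ}) ⧸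
        coinvSub (PowerSeries 𝒪) (PowerSeries 𝒪 ⧸ Ideal.span {ξ}) PowerSeries.X)
      ≃ₗ[𝒪] (𝒪 ⧸ Ideal.span {PowerSeries.constantCoeff ξ})) ∧
    FiniteGammaChar (PowerSeries 𝒪) (PowerSeries 𝒪 ⧸ Ideal.span {ξ}) PowerSeries.X ∧
    gammaKerCard (PowerSeries 𝒪) (PowerSeries 𝒪 ⧸ Ideal.span {ξ}) PowerSeries.X = 1 ∧
    gammaCokerCard (PowerSeries 𝒪) (PowerSeries 𝒪 ⧸ Ideal.span {ξ}) PowerSeries.X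
      = Nat.card (𝒪 ⧸ Ideal.span {PowerSeries.constantCoeff ξ}) := by
  have htors := PowerSeries.torsionBy_X_quotient_span_eq_bot hξ
  let e := PowerSeries.quotientCoinvSubXEquiv ξ
  have : Ring.HasFiniteQuotients 𝒪 := .of_module_finite ℤ_[p] 𝒪
  have : Finite (𝒪 ⧸ Ideal.span {PowerSeries.constantCoeff ξ}) :=
    Ring.HasFiniteQuotients.finiteQuotient (by simpa using hξ)
  have : Finite ((PowerSeries 𝒪 ⧸ Ideal.span {ξ}) ⧸
      coinvSub (PowerSeries 𝒪) (PowerSeries 𝒪 ⧸ Ideal.span {ξ}) PowerSeries.X) :=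
    .of_equiv _ e.symm.toEquiv
  exact ⟨htors, ⟨e⟩, finiteGammaChar_of_torsionBy_eq_bot htors,
    gammaKerCard_eq_one_of_torsionBy_eq_bot htors,
    (gammaCokerCard_eq_of_torsionBy_eq_bot htors).trans (Nat.card_congr e.toEquiv)⟩

/-- for `ξ ∈ Λ_𝒪 = 𝒪[[T]]` coprime with `T` (i.e. `ξ(0) ≠ 0`) and
`M = Λ_𝒪/ξΛ_𝒪`: `M^Γ = M[T] = 0`, `M_Γ = M/TM ≅ 𝒪/ξ(0)𝒪`, so `M` has finite
generalized `Γ`-Euler characteristic equal to `|𝒪/ξ(0)𝒪|`. -/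
theorem stmt11 (p : ℕ) [Fact p.Prime]
    (𝒪 : Type*) [CommRing 𝒪] [IsDomain 𝒪] [IsDiscreteValuationRing 𝒪]
    [Algebra ℤ_[p] 𝒪] [Module.Finite ℤ_[p] 𝒪] [Module.Free ℤ_[p] 𝒪]
    (ξ : PowerSeries 𝒪) (hξ : PowerSeries.constantCoeff ξ ≠ 0) :
    Submodule.torsionBy (PowerSeries 𝒪) (PowerSeries 𝒪 ⧸ Ideal.span {ξ})
        PowerSeries.X = ⊥ ∧
    Nonempty (((PowerSeries 𝒪 ⧸ Ideal.span {ξ}) ⧸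
        coinvSub (PowerSeries 𝒪) (PowerSeries 𝒪 ⧸ Ideal.span {ξ}) PowerSeries.X)
      ≃ₗ[𝒪] (𝒪 ⧸ Ideal.span {PowerSeries.constantCoeff ξ})) ∧
    FiniteGammaChar (PowerSeries 𝒪) (PowerSeries 𝒪 ⧸ Ideal.span {ξ}) PowerSeries.X ∧
    gammaKerCard (PowerSeries 𝒪) (PowerSeries 𝒪 ⧸ Ideal.span {ξ}) PowerSeries.X = 1 ∧
    gammaCokerCard (PowerSeries 𝒪) (PowerSeries 𝒪 ⧸ Ideal.span {ξ}) PowerSeries.X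
      = Nat.card (𝒪 ⧸ Ideal.span {PowerSeries.constantCoeff ξ}) :=
  stmt11_general p 𝒪 ξ hξ
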